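/- arXiv:1507.02089 — 2 statements merged into one kernel-verified Lean document; each statement's English description precedes it below -/
import Mathlib

section
/- Let d, n ≥ 1 be integers, M > 0, and let ζ_1, …, ζ_d ∈ ℂ satisfy |ζ_i| ≥ M for all i; let p_0 ∈ ℂ be nonzero and define p(t) := p_0·Π_{i=1}^d (1 − t/ζ_i). Let t ∈ ℂ with |t| < M, set q := |t|/M, let ε > 0, and assume d·q^{n+1}/((n+1)(1−q)) ≤ ε. Put z := Log p_0 − Σ_{m=1}^n (1/m)·Σ_{i=1}^d (t/ζ_i)^m. Then e^{−ε} ≤ |e^z / p(t)| ≤ e^{ε} and the angle between e^z and p(t) is at most ε. -/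
/-- The angle between two nonzero complex numbers viewed as plane vectors:
`|arg(a/b)| ∈ [0,π]`. -/
noncomputable def cangle (a b : ℂ) : ℝ := |Complex.arg (a / b)|

/-!
Writing `w_i = t/ζ_i`, we have `‖w_i‖ ≤ q < 1` and `p(t) = p₀ ∏ (1 - w_i)`, while `z` is
`Log p₀ + ∑_i T_n(w_i)` with `T_n(w) = -∑_{m ≤ n} w^m/m` the degree-`n` Taylor polynomial of
`Log (1 - w)`. Hence `e^z / p(t) = e^{-E}` with `E = ∑_i (Log (1 - w_i) - T_n(w_i))`, and the
Taylor remainder bound `‖Log (1 - w) - T_n(w)‖ ≤ q^{n+1}/((n+1)(1-q))` gives `‖E‖ ≤ ε`.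
Finally `‖e^u‖ = e^{Re u}` and `|arg e^u| ≤ ‖u‖`.
-/

open Finset

namespace Complex

lemma logTaylor_succ_neg (n : ℕ) (w : ℂ) :
    logTaylor (n + 1) (-w) = -∑ m ∈ Icc 1 n, w ^ m / m := by
  have hrange : range (n + 1) = insert 0 (Icc 1 n) := by
    ext j; simp only [mem_range, mem_insert, mem_Icc]; omega
  rw [logTaylor, hrange, sum_insert (by simp), ← sum_neg_distrib]
  simp only [pow_zero, Nat.cast_zero, div_zero, zero_add]
  refine sum_congr rfl fun j _ => ?_
  rw [neg_pow w j, ← mul_assoc, ← pow_add, show j + 1 + j = 2 * j + 1 by ring, pow_succ, pow_mul]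
  simp [neg_div]

lemma norm_log_one_sub_add_sum_le {w : ℂ} {q : ℝ} (hw : ‖w‖ ≤ q) (hq : q < 1) (n : ℕ) :
    ‖log (1 - w) + ∑ m ∈ Icc 1 n, w ^ m / m‖ ≤ q ^ (n + 1) / ((n + 1) * (1 - q)) := by
  have hw' : ‖-w‖ < 1 := by rw [norm_neg]; linarith
  have hq0 : 0 ≤ q := (norm_nonneg w).trans hw
  calc ‖log (1 - w) + ∑ m ∈ Icc 1 n, w ^ m / m‖
      = ‖log (1 + -w) - logTaylor (n + 1) (-w)‖ := by
        rw [logTaylor_succ_neg, sub_neg_eq_add, ← sub_eq_add_neg]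
    _ ≤ ‖-w‖ ^ (n + 1) * (1 - ‖-w‖)⁻¹ / (n + 1) := norm_log_sub_logTaylor_le n hw'
    _ ≤ q ^ (n + 1) * (1 - q)⁻¹ / (n + 1) := by
        rw [norm_neg] at hw' ⊢
        gcongr
    _ = q ^ (n + 1) / ((n + 1) * (1 - q)) := by rw [← div_eq_mul_inv, div_div, mul_comm (1 - q)]

lemma exp_log_sub_sum_div_mul_prod {ι : Type*} (s : Finset ι) {p₀ : ℂ} (hp₀ : p₀ ≠ 0)
    {w : ι → ℂ} (hw : ∀ i ∈ s, w i ≠ 1) (S : ι → ℂ) :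
    exp (log p₀ - ∑ i ∈ s, S i) / (p₀ * ∏ i ∈ s, (1 - w i)) =
      exp (-∑ i ∈ s, (log (1 - w i) + S i)) := by
  rw [exp_sub, exp_log hp₀, exp_neg, exp_sum, exp_sum]
  have hlog : ∀ i ∈ s, exp (log (1 - w i) + S i) = (1 - w i) * exp (S i) := fun i hi => by
    rw [exp_add, exp_log (sub_ne_zero.2 (hw i hi).symm)]
  rw [prod_congr rfl hlog, prod_mul_distrib]
  have hprod : ∏ i ∈ s, (1 - w i) ≠ 0 :=
    prod_ne_zero_iff.2 fun i hi => sub_ne_zero.2 (hw i hi).symm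
  field_simp

lemma abs_arg_exp_le_norm (u : ℂ) : |arg (exp u)| ≤ ‖u‖ := by
  rcases lt_or_ge ‖u‖ Real.pi with hu | hu
  · have him := (abs_im_le_norm u).trans_lt hu
    rw [← log_im, log_exp (by linarith [neg_abs_le u.im]) (by linarith [le_abs_self u.im])]
    exact abs_im_le_norm u
  · exact (abs_arg_le_pi _).trans hu

lemma exp_neg_norm_le_norm_exp (u : ℂ) : Real.exp (-‖u‖) ≤ ‖exp u‖ := by
  rw [norm_exp, Real.exp_le_exp]
  exact (neg_le_neg (abs_re_le_norm u)).trans (neg_abs_le u.re)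

end Complex

open Complex

theorem stmt8_general (d n : ℕ) (M : ℝ) (hM : 0 < M)
    (ζ : Fin d → ℂ) (hζ : ∀ i, M ≤ ‖ζ i‖)
    (p₀ : ℂ) (hp₀ : p₀ ≠ 0)
    (p : ℂ → ℂ) (hp : ∀ s, p s = p₀ * ∏ i, (1 - s / ζ i))
    (t : ℂ) (ht : ‖t‖ < M) (q : ℝ) (hq : q = ‖t‖ / M)
    (ε : ℝ)
    (hsmall : d * q ^ (n + 1) / ((n + 1) * (1 - q)) ≤ ε)
    (z : ℂ)
    (hz : z = Complex.log p₀ - ∑ m ∈ Finset.Icc 1 n, (1 / (m : ℂ)) * ∑ i, (t / ζ i) ^ m) :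
    Real.exp (-ε) ≤ ‖Complex.exp z / p t‖ ∧
      ‖Complex.exp z / p t‖ ≤ Real.exp ε ∧
      cangle (Complex.exp z) (p t) ≤ ε := by
  have hq1 : q < 1 := by rwa [hq, div_lt_one hM]
  have hwq : ∀ i, ‖t / ζ i‖ ≤ q := fun i => by
    rw [hq, norm_div]
    exact div_le_div_of_nonneg_left (norm_nonneg t) hM (hζ i)
  have hw1 : ∀ i ∈ univ, t / ζ i ≠ 1 := fun i _ h => by
    have := hwq i
    rw [h, norm_one] at this
    linarith
  set E := ∑ i, (log (1 - t / ζ i) + ∑ m ∈ Icc 1 n, (t / ζ i) ^ m / m)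
  have hE : ‖-E‖ ≤ ε := calc
    ‖-E‖ ≤ ∑ i, ‖log (1 - t / ζ i) + ∑ m ∈ Icc 1 n, (t / ζ i) ^ m / m‖ := by
        rw [norm_neg]; exact norm_sum_le _ _
    _ ≤ ∑ _i : Fin d, q ^ (n + 1) / ((n + 1) * (1 - q)) :=
        sum_le_sum fun i _ => norm_log_one_sub_add_sum_le (hwq i) hq1 n
    _ = d * q ^ (n + 1) / ((n + 1) * (1 - q)) := by simp [mul_div_assoc]
    _ ≤ ε := hsmall
  have hkey : exp z / p t = exp (-E) := by
    rw [hz, hp, ← exp_log_sub_sum_div_mul_prod univ hp₀ hw1]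
    simp_rw [mul_sum]
    rw [sum_comm]
    congr 4 with i
    exact sum_congr rfl fun m _ => by ring
  refine ⟨?_, ?_, ?_⟩
  · rw [hkey]
    exact (Real.exp_le_exp.2 (neg_le_neg hE)).trans (exp_neg_norm_le_norm_exp _)
  · rw [hkey]
    exact (norm_exp_le_exp_norm _).trans (Real.exp_le_exp.2 hE)
  · rw [cangle, hkey]
    exact (abs_arg_exp_le_norm _).trans hE

/-- the degree-`n` Taylor approximation `e^z` of
`p(t) = p₀·Π_i (1 − t/ζ_i)` is a multiplicative `ε`-approximation to `p(t)` whenever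
`d·q^{n+1}/((n+1)(1−q)) ≤ ε`, where `q = |t|/M`. -/
theorem stmt8 (d n : ℕ) (hd : 1 ≤ d) (hn : 1 ≤ n) (M : ℝ) (hM : 0 < M)
    (ζ : Fin d → ℂ) (hζ : ∀ i, M ≤ ‖ζ i‖)
    (p₀ : ℂ) (hp₀ : p₀ ≠ 0)
    (p : ℂ → ℂ) (hp : ∀ s, p s = p₀ * ∏ i, (1 - s / ζ i))
    (t : ℂ) (ht : ‖t‖ < M) (q : ℝ) (hq : q = ‖t‖ / M)
    (ε : ℝ) (hε : 0 < ε)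
    (hsmall : d * q ^ (n + 1) / ((n + 1) * (1 - q)) ≤ ε)
    (z : ℂ)
    (hz : z = Complex.log p₀ - ∑ m ∈ Finset.Icc 1 n, (1 / (m : ℂ)) * ∑ i, (t / ζ i) ^ m) :
    Real.exp (-ε) ≤ ‖Complex.exp z / p t‖ ∧
      ‖Complex.exp z / p t‖ ≤ Real.exp ε ∧
      cangle (Complex.exp z) (p t) ≤ ε :=
  stmt8_general d n M hM ζ hζ p₀ hp₀ p hp t ht q hq ε hsmall z hz
end

section
/- Let h : ℕ² → ℂ be the 2-color edge-coloring model defined by h(α₁,α₂) := 1 if α₁ ≤ 1 and h(α₁,α₂) := 0 otherwise. Then for every finite simple graph G, the partition function p(G)(h) equals the number of matchings of G, i.e. the number of sets of pairwise disjoint edges of G (including the empty set). -/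
/-!
Since `h` takes only the values `0` and `1`, `p(G)(h)` counts the edge colorings in which every
vertex meets at most one edge of the first color (`0 : Fin 2`). The edges of that color then form
a matching, and every matching is the first color class of exactly one coloring.
-/

noncomputable section

variable {V : Type} [Fintype V] [DecidableEq V]

/-- `colorVec G φ v j` = number of edges incident with `v` that `φ` colors `j`,
so `colorVec G φ v = φ(δ(v)) ∈ ℕ^k`. -/
def colorVec {k : ℕ} (G : SimpleGraph V) (φ : G.edgeSet → Fin k) (v : V) : Fin k → ℕ :=
  fun j => Nat.card {e : G.edgeSet // v ∈ (e : Sym2 V) ∧ φ e = j}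

/-- Partition function of a `k`-color edge-coloring model `h`:
`p(G)(h) = Σ_{φ : E → [k]} Π_{v ∈ V} h(φ(δ(v)))`. -/
def pf (k : ℕ) (G : SimpleGraph V) (h : (Fin k → ℕ) → ℂ) : ℂ :=
  ∑ᶠ φ : G.edgeSet → Fin k, ∏ v : V, h (colorVec G φ v)

/-- Degree of a vertex. -/
def deg (G : SimpleGraph V) (v : V) : ℕ := Nat.card (G.neighborSet v)

/-- Maximum degree Δ(G). -/
def maxDeg (G : SimpleGraph V) : ℕ := Finset.univ.sup (deg G)

theorem Set.pairwise_forall_not_and_iff {α ι : Type*} (s : Set ι) (R : α → ι → Prop) :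
    s.Pairwise (fun i j => ∀ a, ¬(R a i ∧ R a j)) ↔ ∀ a, {i | R a i ∧ i ∈ s}.Subsingleton := by
  constructor
  · intro hs a i ⟨hai, hi⟩ j ⟨haj, hj⟩
    by_contra hij
    exact hs hi hj hij a ⟨hai, haj⟩
  · intro hs i hi j hj hij a ⟨hai, haj⟩
    exact hij (hs a ⟨hai, hi⟩ ⟨haj, hj⟩)

open Classical in
def finTwoArrowEquivSet (α : Type*) : (α → Fin 2) ≃ Set α where
  toFun φ := {a | φ a = 0}
  invFun s a := if a ∈ s then 0 else 1
  left_inv φ := by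
    funext a
    obtain ha | ha : φ a = 0 ∨ φ a = 1 := by omega
    all_goals simp [ha]
  right_inv s := by
    ext a
    by_cases ha : a ∈ s <;> simp [ha]

theorem pf_eq_natCard_of_eq_ite {V : Type} [Fintype V] {k : ℕ} (G : SimpleGraph V)
    (P : (Fin k → ℕ) → Prop) [DecidablePred P] (h : (Fin k → ℕ) → ℂ)
    (hh : ∀ α, h α = if P α then 1 else 0) :
    pf k G h = Nat.card {φ : G.edgeSet → Fin k // ∀ v, P (colorVec G φ v)} := by
  classical
  rw [pf, finsum_eq_sum_of_fintype]
  simp only [hh, Finset.prod_boole, Finset.mem_univ, true_implies]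
  rw [Finset.sum_boole, Nat.card_eq_fintype_card, Fintype.card_subtype]

theorem colorVec_le_one_iff {V : Type} [Finite V] {k : ℕ} (G : SimpleGraph V)
    (φ : G.edgeSet → Fin k) (v : V) (j : Fin k) :
    colorVec G φ v j ≤ 1 ↔ {e : G.edgeSet | v ∈ (e : Sym2 V) ∧ φ e = j}.Subsingleton := by
  rw [colorVec, Finite.card_le_one_iff_subsingleton, ← Set.subsingleton_coe]
  rfl

theorem stmt15_general (h : (Fin 2 → ℕ) → ℂ)
    (hh : ∀ α : Fin 2 → ℕ, h α = if α 0 ≤ 1 then 1 else 0)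
    (V : Type) [Fintype V] (G : SimpleGraph V) :
    pf 2 G h =
      (Nat.card {M : Set (Sym2 V) // M ⊆ G.edgeSet ∧
        M.Pairwise fun e f => ∀ v : V, ¬(v ∈ e ∧ v ∈ f)} : ℂ) := by
  rw [pf_eq_natCard_of_eq_ite G (fun α => α 0 ≤ 1) h hh]
  have hmatching : ∀ φ : G.edgeSet → Fin 2, (∀ v, colorVec G φ v 0 ≤ 1) ↔
      (Subtype.val '' finTwoArrowEquivSet G.edgeSet φ).Pairwise
        fun e f => ∀ v : V, ¬(v ∈ e ∧ v ∈ f) := by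
    intro φ
    rw [Subtype.val_injective.injOn.pairwise_image, Set.pairwise_forall_not_and_iff]
    simp only [colorVec_le_one_iff]
    rfl
  exact congrArg _ (Nat.card_congr <|
    (((finTwoArrowEquivSet G.edgeSet).trans (Equiv.Set.powerset G.edgeSet).symm).subtypeEquiv
      hmatching).trans (Equiv.subtypeSubtypeEquivSubtypeInter _ _))

/-- for the 2-color edge-coloring model with `h(α₁,α₂) = 1` if `α₁ ≤ 1`
and `0` otherwise, `p(G)(h)` equals the number of matchings of `G` (sets of pairwise
disjoint edges, including the empty set). -/
theorem stmt15 (h : (Fin 2 → ℕ) → ℂ)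
    (hh : ∀ α : Fin 2 → ℕ, h α = if α 0 ≤ 1 then 1 else 0)
    (V : Type) [Fintype V] [DecidableEq V] (G : SimpleGraph V) :
    pf 2 G h =
      (Nat.card {M : Set (Sym2 V) // M ⊆ G.edgeSet ∧
        M.Pairwise fun e f => ∀ v : V, ¬(v ∈ e ∧ v ∈ f)} : ℂ) :=
  stmt15_general h hh V G
end
end
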